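/- arXiv:2311.17270 — 3 statements merged into one kernel-verified Lean document; each statement's English description precedes it below -/
import Mathlib

section
/- Let τ: [0,T] → [0,T] be nondecreasing and right-continuous with left-continuous inverse τ⁻¹, let σ > 0, and set f ≡ σ²/(1+σ²) on [0,T]² with T = 1. Then the function g(t,s) := −𝟙_{t < τ⁻¹(s)} · σ²/(1 + σ²(1 + s − τ⁻¹(s))) satisfies, for all 0 ≤ s ≤ t ≤ 1 with t < τ⁻¹(s), the equation σ²/(1+σ²) + g(t,s) = (σ²/(1+σ²)) ∫ₛ^{τ⁻¹(s)} g(u,s) du. -/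
/-
The kernel is constant, `-c` with `c = σ²/(1+σ²(1+s-τ⁻¹(s)))`, on `[s, τ⁻¹(s))` and vanishes
beyond, so the integral equals `-(τ⁻¹(s) - s) c`. With `κ = σ²/(1+σ²)` the equation becomes
`κ - c = -κ (τ⁻¹(s) - s) c`, an identity of rational functions whose only requirement is that
`1 + σ²(1+s-τ⁻¹(s))` does not vanish; this holds because `τ⁻¹(s) ≤ 1 ≤ 1 + s`.
-/

open MeasureTheory

/-- The explicit kernel `g(t,s) = −𝟙_{t<τ⁻¹(s)} σ²/(1+σ²(1+s−τ⁻¹(s)))`. -/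
noncomputable def gker (σ : ℝ) (τinv : ℝ → ℝ) (t s : ℝ) : ℝ :=
  if t < τinv s then -(σ ^ 2 / (1 + σ ^ 2 * (1 + s - τinv s))) else 0

theorem gker_of_lt {σ : ℝ} {τinv : ℝ → ℝ} {t s : ℝ} (h : t < τinv s) :
    gker σ τinv t s = -(σ ^ 2 / (1 + σ ^ 2 * (1 + s - τinv s))) :=
  if_pos h

theorem setIntegral_Icc_gker {σ : ℝ} {τinv : ℝ → ℝ} {s : ℝ} (hs : s ≤ τinv s) :
    ∫ u in Set.Icc s (τinv s), gker σ τinv u s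
      = (τinv s - s) * -(σ ^ 2 / (1 + σ ^ 2 * (1 + s - τinv s))) := by
  rw [integral_Icc_eq_integral_Ico,
    setIntegral_congr_fun measurableSet_Ico fun u hu => gker_of_lt hu.2,
    setIntegral_const, Real.volume_real_Ico_of_le hs, smul_eq_mul]

theorem constant_kernel_resolvent_identity (σ x : ℝ) (hx : 1 + σ ^ 2 * x ≠ 0) :
    σ ^ 2 / (1 + σ ^ 2) + -(σ ^ 2 / (1 + σ ^ 2 * x))
      = σ ^ 2 / (1 + σ ^ 2) * ((1 - x) * -(σ ^ 2 / (1 + σ ^ 2 * x))) := by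
  have h1 : (1 : ℝ) + σ ^ 2 ≠ 0 := by positivity
  field_simp
  ring

theorem gker_solves_fredholm_part_general
    (σ : ℝ) (τinv : ℝ → ℝ)
    (hτ2 : ∀ s ∈ Set.Icc (0:ℝ) 1, τinv s ≤ 1) :
    ∀ s t : ℝ, 0 ≤ s → s ≤ t → t ≤ 1 → t < τinv s →
      σ ^ 2 / (1 + σ ^ 2) + gker σ τinv t s
        = (σ ^ 2 / (1 + σ ^ 2)) * ∫ u in Set.Icc s (τinv s), gker σ τinv u s := by
  intro s t hs hst ht1 htτ
  have hτ_le : τinv s ≤ 1 := hτ2 s ⟨hs, hst.trans ht1⟩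
  have hD : 1 + σ ^ 2 * (1 + s - τinv s) ≠ 0 := by
    have : 0 ≤ σ ^ 2 * (1 + s - τinv s) := by
      apply mul_nonneg (sq_nonneg σ); linarith
    linarith
  rw [gker_of_lt htτ, setIntegral_Icc_gker (hst.trans htτ.le),
    show τinv s - s = 1 - (1 + s - τinv s) by ring]
  exact constant_kernel_resolvent_identity σ _ hD

/-- The explicit kernel `g` solves the Fredholm part of the kernel equation in
the computational example with constant kernel `f ≡ σ²/(1+σ²)` (`T = 1`):
for `0 ≤ s ≤ t ≤ 1` with `t < τ⁻¹(s)`,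
`σ²/(1+σ²) + g(t,s) = (σ²/(1+σ²)) ∫ₛ^{τ⁻¹(s)} g(u,s) du`. -/
theorem gker_solves_fredholm_part
    (σ : ℝ) (hσ : 0 < σ) (τinv : ℝ → ℝ)
    (hτ1 : ∀ s : ℝ, s ≤ τinv s) (hτ2 : ∀ s ∈ Set.Icc (0:ℝ) 1, τinv s ≤ 1) :
    ∀ s t : ℝ, 0 ≤ s → s ≤ t → t ≤ 1 → t < τinv s →
      σ ^ 2 / (1 + σ ^ 2) + gker σ τinv t s
        = (σ ^ 2 / (1 + σ ^ 2)) * ∫ u in Set.Icc s (τinv s), gker σ τinv u s :=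
  gker_solves_fredholm_part_general σ τinv hτ2
end

section
/- Let σ > 0, τ⁻¹ as above with τ⁻¹(u) ≥ u, and define g(t,s) := −𝟙_{t<τ⁻¹(s)} σ²/(1+σ²(1+s−τ⁻¹(s))) on [0,1]². Set g̃(s,u) := g(s,u) − ∫₀ᵘ g(s,v) g(u,v) dv for 0 ≤ u ≤ s ≤ 1. Then ∫₀¹∫₀ˢ (σ²/(1+σ²)) g̃(s,u) du ds = −∫₀¹ σ⁴(τ⁻¹(u)−u) / ((1+σ²)(1+σ²(1+u−τ⁻¹(u)))) du − (1/2)(σ²/(1+σ²)) ∫₀¹ (σ²(τ⁻¹(v)−v)/(1+σ²(1+v−τ⁻¹(v))))² dv. -/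
/-!
For `u ≤ s` the support condition `s < τ⁻¹(v)` of `g(s,v)` forces `u < τ⁻¹(v)`, so the product
`g(s,v) g(u,v)` is just `g(s,v)²`. Both resulting terms are integrals over the triangle
`0 ≤ u ≤ s ≤ 1`; integrating in `s` first turns the indicator `𝟙_{s<τ⁻¹(u)}` into the interval
`[u, τ⁻¹(u)] ⊆ [u, 1]`. This gives `(τ⁻¹(u) − u) c(u)` for the linear term and, after Cauchy's
formula `∫₀ˢ∫₀ᵘ h = ∫₀ˢ (s − v) h(v) dv`, `(τ⁻¹(v) − v)² c(v)² / 2` for the quadratic one, where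
`c(u) = σ²/(1+σ²(1+u−τ⁻¹(u)))` is `gcoef σ τinv u`.
-/

open MeasureTheory

open Set

def lowerTriangle (a b : ℝ) : Set (ℝ × ℝ) := {p | a ≤ p.2 ∧ p.2 ≤ p.1 ∧ p.1 ≤ b}

lemma measurableSet_lowerTriangle (a b : ℝ) : MeasurableSet (lowerTriangle a b) :=
  (measurableSet_le measurable_const measurable_snd).inter
    ((measurableSet_le measurable_snd measurable_fst).inter
      (measurableSet_le measurable_fst measurable_const))

lemma lowerTriangle_subset_Icc_prod_Icc (a b : ℝ) : lowerTriangle a b ⊆ Icc a b ×ˢ Icc a b :=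
  fun _ ⟨hu, hus, hs⟩ => ⟨⟨hu.trans hus, hs⟩, ⟨hu, hus.trans hs⟩⟩

lemma integrableOn_lowerTriangle_of_abs_le {F : ℝ → ℝ → ℝ} {a b M : ℝ}
    (hF : Measurable fun p : ℝ × ℝ => F p.1 p.2) (hM : ∀ p ∈ lowerTriangle a b, |F p.1 p.2| ≤ M) :
    IntegrableOn (fun p : ℝ × ℝ => F p.1 p.2) (lowerTriangle a b) := by
  refine Measure.integrableOn_of_bounded ?_ hF.aestronglyMeasurable (M := M) ?_
  · refine ne_top_of_le_ne_top ?_ (measure_mono (lowerTriangle_subset_Icc_prod_Icc a b))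
    rw [Measure.volume_eq_prod, Measure.prod_prod]
    exact ENNReal.mul_ne_top measure_Icc_lt_top.ne measure_Icc_lt_top.ne
  · filter_upwards [ae_restrict_mem (measurableSet_lowerTriangle a b)] with p hp
    exact hM p hp

lemma setIntegral_lowerTriangle_eq_integral_integral (F : ℝ → ℝ → ℝ) {a b : ℝ}
    (hF : IntegrableOn (fun p : ℝ × ℝ => F p.1 p.2) (lowerTriangle a b)) :
    ∫ p in lowerTriangle a b, F p.1 p.2
      = ∫ s in Icc a b, ∫ u in Icc a s, F s u := by
  rw [← integral_indicator (measurableSet_lowerTriangle a b), Measure.volume_eq_prod,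
    integral_prod _ ((integrable_indicator_iff (measurableSet_lowerTriangle a b)).2 hF),
    ← integral_indicator measurableSet_Icc]
  congr 1 with s
  by_cases hs : s ∈ Icc a b
  · rw [indicator_of_mem hs, ← integral_indicator measurableSet_Icc]
    congr 1 with u
    simp only [indicator, lowerTriangle, mem_ofPred_eq, mem_Icc, hs.2, and_true]
  · rw [indicator_of_notMem hs]
    have hT : ∀ u, (s, u) ∉ lowerTriangle a b :=
      fun u ⟨hu, hus, hsb⟩ => hs ⟨hu.trans hus, hsb⟩
    simp only [indicator_of_notMem (hT _), integral_zero]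

lemma setIntegral_lowerTriangle_eq_integral_integral_swap (F : ℝ → ℝ → ℝ) {a b : ℝ}
    (hF : IntegrableOn (fun p : ℝ × ℝ => F p.1 p.2) (lowerTriangle a b)) :
    ∫ p in lowerTriangle a b, F p.1 p.2
      = ∫ u in Icc a b, ∫ s in Icc u b, F s u := by
  rw [← integral_indicator (measurableSet_lowerTriangle a b), Measure.volume_eq_prod,
    integral_prod_symm _ ((integrable_indicator_iff (measurableSet_lowerTriangle a b)).2 hF),
    ← integral_indicator measurableSet_Icc]
  congr 1 with u
  by_cases hu : u ∈ Icc a b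
  · rw [indicator_of_mem hu, ← integral_indicator measurableSet_Icc]
    congr 1 with s
    simp only [indicator, lowerTriangle, mem_ofPred_eq, mem_Icc, hu.1, true_and]
  · rw [indicator_of_notMem hu]
    have hT : ∀ s, (s, u) ∉ lowerTriangle a b :=
      fun s ⟨hau, hus, hsb⟩ => hu ⟨hau, hus.trans hsb⟩
    simp only [indicator_of_notMem (hT _), integral_zero]

lemma integral_Icc_integral_Icc_eq_integral_sub_mul {h : ℝ → ℝ} {a b : ℝ}
    (hh : IntegrableOn h (Icc a b)) :
    ∫ u in Icc a b, ∫ v in Icc a u, h v = ∫ v in Icc a b, (b - v) * h v := by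
  have hint : IntegrableOn (fun p : ℝ × ℝ => h p.2) (lowerTriangle a b) := by
    refine IntegrableOn.mono_set ?_ (lowerTriangle_subset_Icc_prod_Icc a b)
    rw [IntegrableOn, Measure.volume_eq_prod, ← Measure.prod_restrict]
    exact hh.comp_snd _
  rw [← setIntegral_lowerTriangle_eq_integral_integral (fun _ v => h v) hint,
    setIntegral_lowerTriangle_eq_integral_integral_swap (fun _ v => h v) hint]
  refine setIntegral_congr_fun measurableSet_Icc fun v hv => ?_
  rw [setIntegral_const, Real.volume_real_Icc_of_le hv.2, smul_eq_mul]

lemma setIntegral_Icc_ite_lt {u t b : ℝ} (hut : u ≤ t) (htb : t ≤ b) (f : ℝ → ℝ) :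
    ∫ s in Icc u b, (if s < t then f s else 0) = ∫ s in u..t, f s := by
  have hIcc : Icc u b ∩ Iio t = Ico u t :=
    ext fun s => ⟨fun ⟨⟨hus, _⟩, hst⟩ => ⟨hus, hst⟩,
      fun ⟨hus, hst⟩ => ⟨⟨hus, hst.le.trans htb⟩, hst⟩⟩
  rw [intervalIntegral.integral_of_le hut, ← integral_Ico_eq_integral_Ioc, ← hIcc,
    ← setIntegral_indicator measurableSet_Iio]
  rfl

lemma measurable_setIntegral_Icc {F : ℝ → ℝ → ℝ} (hF : Measurable fun p : ℝ × ℝ => F p.1 p.2)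
    (a : ℝ) : Measurable fun p : ℝ × ℝ => ∫ v in Icc a p.2, F p.1 v := by
  simp_rw [← integral_indicator measurableSet_Icc]
  refine (StronglyMeasurable.integral_prod_right (f := fun (p : ℝ × ℝ) v =>
    (Icc a p.2).indicator (F p.1) v) ?_).measurable
  refine (Measurable.ite ?_ (hF.comp (measurable_fst.fst.prodMk measurable_snd))
    measurable_const).stronglyMeasurable
  exact (measurableSet_le measurable_const measurable_snd).inter
    (measurableSet_le measurable_snd measurable_fst.snd)

section Kernel

variable {σ : ℝ} {τinv : ℝ → ℝ}

noncomputable def gcoef (σ : ℝ) (τinv : ℝ → ℝ) (u : ℝ) : ℝ :=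
  σ ^ 2 / (1 + σ ^ 2 * (1 + u - τinv u))

lemma gker_eq_ite (t s : ℝ) :
    gker σ τinv t s = if t < τinv s then -gcoef σ τinv s else 0 := rfl

lemma gker_mul_gker_of_le {s u : ℝ} (hus : u ≤ s) (v : ℝ) :
    gker σ τinv s v * gker σ τinv u v = gker σ τinv s v ^ 2 := by
  by_cases hs : s < τinv v
  · simp only [gker_eq_ite, hs, if_true, hus.trans_lt hs]
    ring
  · simp only [gker_eq_ite, hs, if_false]
    ring

lemma measurable_gker (hτ : Measurable τinv) : Measurable fun p : ℝ × ℝ => gker σ τinv p.1 p.2 :=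
  Measurable.ite (measurableSet_lt measurable_fst (hτ.comp measurable_snd))
    (by fun_prop) measurable_const

lemma gcoef_mem_Icc {u : ℝ} (hu : τinv u ≤ 1 + u) : gcoef σ τinv u ∈ Icc 0 (σ ^ 2) := by
  have hden : 1 ≤ 1 + σ ^ 2 * (1 + u - τinv u) :=
    le_add_of_nonneg_right (mul_nonneg (sq_nonneg σ) (by linarith))
  exact ⟨div_nonneg (sq_nonneg σ) (zero_le_one.trans hden), div_le_self (sq_nonneg σ) hden⟩

lemma abs_gker_le {u : ℝ} (hu : τinv u ≤ 1 + u) (t : ℝ) : |gker σ τinv t u| ≤ σ ^ 2 := by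
  have hc := gcoef_mem_Icc (σ := σ) hu
  rw [gker_eq_ite]
  split_ifs
  · rw [abs_neg, abs_of_nonneg hc.1]
    exact hc.2
  · simpa using sq_nonneg σ

lemma integral_Icc_gker {u : ℝ} (hτ1 : u ≤ τinv u) (hτ2 : τinv u ≤ 1) :
    ∫ s in Icc u 1, gker σ τinv s u = -(gcoef σ τinv u * (τinv u - u)) := by
  simp only [gker_eq_ite]
  rw [setIntegral_Icc_ite_lt hτ1 hτ2, intervalIntegral.integral_const, smul_eq_mul]
  ring

lemma integral_Icc_sub_mul_gker_sq {v : ℝ} (hτ1 : v ≤ τinv v) (hτ2 : τinv v ≤ 1) :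
    ∫ s in Icc v 1, (s - v) * gker σ τinv s v ^ 2 = (gcoef σ τinv v * (τinv v - v)) ^ 2 / 2 := by
  have h : ∀ s, (s - v) * gker σ τinv s v ^ 2
      = if s < τinv v then (s - v) * gcoef σ τinv v ^ 2 else 0 := fun s => by
    rw [gker_eq_ite]; split_ifs <;> ring
  simp only [h]
  rw [setIntegral_Icc_ite_lt hτ1 hτ2]
  rw [intervalIntegral.integral_mul_const, intervalIntegral.integral_comp_sub_right (fun x => x),
    sub_self, integral_id]
  ring

lemma integrableOn_lowerTriangle_gker (hτ : Measurable τinv)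
    (hτ2 : ∀ u ∈ Icc (0 : ℝ) 1, τinv u ≤ 1) :
    IntegrableOn (fun p : ℝ × ℝ => gker σ τinv p.1 p.2) (lowerTriangle 0 1) :=
  integrableOn_lowerTriangle_of_abs_le (measurable_gker hτ) fun _ ⟨hu, hus, hs⟩ =>
    abs_gker_le (by linarith [hτ2 _ ⟨hu, hus.trans hs⟩]) _

lemma setIntegral_lowerTriangle_gker (hτ : Measurable τinv)
    (hτ1 : ∀ u ∈ Icc (0 : ℝ) 1, u ≤ τinv u) (hτ2 : ∀ u ∈ Icc (0 : ℝ) 1, τinv u ≤ 1) :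
    ∫ p in lowerTriangle 0 1, gker σ τinv p.1 p.2
      = -∫ u in Icc 0 1, gcoef σ τinv u * (τinv u - u) := by
  rw [setIntegral_lowerTriangle_eq_integral_integral_swap _
    (integrableOn_lowerTriangle_gker hτ hτ2), ← integral_neg]
  exact setIntegral_congr_fun measurableSet_Icc fun u hu =>
    integral_Icc_gker (hτ1 u hu) (hτ2 u hu)

lemma abs_gker_sq_le_of_mem_Icc (hτ2 : ∀ u ∈ Icc (0 : ℝ) 1, τinv u ≤ 1) {v : ℝ}
    (hv : v ∈ Icc (0 : ℝ) 1) (t : ℝ) : |gker σ τinv t v ^ 2| ≤ (σ ^ 2) ^ 2 := by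
  rw [abs_pow]
  exact pow_le_pow_left₀ (abs_nonneg _) (abs_gker_le (by linarith [hτ2 v hv, hv.1]) t) 2

lemma integrableOn_lowerTriangle_integral_gker_sq (hτ : Measurable τinv)
    (hτ2 : ∀ u ∈ Icc (0 : ℝ) 1, τinv u ≤ 1) :
    IntegrableOn (fun p : ℝ × ℝ => ∫ v in Icc 0 p.2, gker σ τinv p.1 v ^ 2)
      (lowerTriangle 0 1) := by
  refine integrableOn_lowerTriangle_of_abs_le
    (F := fun s u => ∫ v in Icc 0 u, gker σ τinv s v ^ 2) (M := (σ ^ 2) ^ 2)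
    (measurable_setIntegral_Icc (F := fun s v => gker σ τinv s v ^ 2)
      ((measurable_gker hτ).pow_const 2) 0)
    fun p ⟨hu, hus, hs⟩ => ?_
  calc |∫ v in Icc 0 p.2, gker σ τinv p.1 v ^ 2|
      ≤ (σ ^ 2) ^ 2 * volume.real (Icc 0 p.2) :=
        (Real.norm_eq_abs _).symm.trans_le <|
          norm_setIntegral_le_of_norm_le_const measure_Icc_lt_top fun v hv =>
            abs_gker_sq_le_of_mem_Icc hτ2 ⟨hv.1, hv.2.trans (hus.trans hs)⟩ _
    _ = (σ ^ 2) ^ 2 * p.2 := by rw [Real.volume_real_Icc_of_le hu, sub_zero]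
    _ ≤ (σ ^ 2) ^ 2 := mul_le_of_le_one_right (by positivity) (hus.trans hs)

lemma integrableOn_lowerTriangle_sub_mul_gker_sq (hτ : Measurable τinv)
    (hτ2 : ∀ u ∈ Icc (0 : ℝ) 1, τinv u ≤ 1) :
    IntegrableOn (fun p : ℝ × ℝ => (p.1 - p.2) * gker σ τinv p.1 p.2 ^ 2)
      (lowerTriangle 0 1) := by
  refine integrableOn_lowerTriangle_of_abs_le (F := fun s v => (s - v) * gker σ τinv s v ^ 2)
    (M := (σ ^ 2) ^ 2) ((measurable_fst.sub measurable_snd).mul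
      ((measurable_gker hτ).pow_const 2)) fun p ⟨hu, hus, hs⟩ => ?_
  rw [abs_mul, abs_of_nonneg (sub_nonneg.2 hus)]
  exact (mul_le_of_le_one_left (abs_nonneg _) (by linarith)).trans
    (abs_gker_sq_le_of_mem_Icc hτ2 ⟨hu, hus.trans hs⟩ _)

lemma setIntegral_lowerTriangle_integral_gker_sq (hτ : Measurable τinv)
    (hτ1 : ∀ u ∈ Icc (0 : ℝ) 1, u ≤ τinv u) (hτ2 : ∀ u ∈ Icc (0 : ℝ) 1, τinv u ≤ 1) :
    ∫ p in lowerTriangle 0 1, ∫ v in Icc 0 p.2, gker σ τinv p.1 v ^ 2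
      = (∫ v in Icc 0 1, (gcoef σ τinv v * (τinv v - v)) ^ 2) / 2 := by
  have hslice (s : ℝ) (hs : s ∈ Icc (0 : ℝ) 1) :
      IntegrableOn (fun v => gker σ τinv s v ^ 2) (Icc 0 s) :=
    Measure.integrableOn_of_bounded measure_Icc_lt_top.ne
      (((measurable_gker hτ).pow_const 2).comp
        (measurable_const.prodMk measurable_id)).aestronglyMeasurable
      (ae_restrict_of_forall_mem measurableSet_Icc fun v hv =>
        (abs_gker_sq_le_of_mem_Icc hτ2 ⟨hv.1, hv.2.trans hs.2⟩ s).trans_eq'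
          (Real.norm_eq_abs _))
  have hweighted := integrableOn_lowerTriangle_sub_mul_gker_sq (σ := σ) hτ hτ2
  calc ∫ p in lowerTriangle 0 1, ∫ v in Icc 0 p.2, gker σ τinv p.1 v ^ 2
      = ∫ s in Icc 0 1, ∫ u in Icc 0 s, ∫ v in Icc 0 u, gker σ τinv s v ^ 2 :=
        setIntegral_lowerTriangle_eq_integral_integral
          (fun s u => ∫ v in Icc 0 u, gker σ τinv s v ^ 2)
          (integrableOn_lowerTriangle_integral_gker_sq hτ hτ2)
    _ = ∫ s in Icc 0 1, ∫ v in Icc 0 s, (s - v) * gker σ τinv s v ^ 2 :=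
        setIntegral_congr_fun measurableSet_Icc fun s hs =>
          integral_Icc_integral_Icc_eq_integral_sub_mul (hslice s hs)
    _ = ∫ p in lowerTriangle 0 1, (p.1 - p.2) * gker σ τinv p.1 p.2 ^ 2 :=
        (setIntegral_lowerTriangle_eq_integral_integral _ hweighted).symm
    _ = ∫ v in Icc 0 1, ∫ s in Icc v 1, (s - v) * gker σ τinv s v ^ 2 :=
        setIntegral_lowerTriangle_eq_integral_integral_swap
          (fun s v => (s - v) * gker σ τinv s v ^ 2) hweighted
    _ = ∫ v in Icc 0 1, (gcoef σ τinv v * (τinv v - v)) ^ 2 / 2 :=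
        setIntegral_congr_fun measurableSet_Icc fun v hv =>
          integral_Icc_sub_mul_gker_sq (hτ1 v hv) (hτ2 v hv)
    _ = (∫ v in Icc 0 1, (gcoef σ τinv v * (τinv v - v)) ^ 2) / 2 := integral_div _ _

end Kernel

theorem f_gtilde_double_integral_general
    (σ : ℝ) (τinv : ℝ → ℝ) (hmono : Monotone τinv)
    (hτ1 : ∀ u : ℝ, u ≤ τinv u) (hτ2 : ∀ u ∈ Set.Icc (0:ℝ) 1, τinv u ≤ 1) :
    ∫ s in Set.Icc (0:ℝ) 1, ∫ u in Set.Icc (0:ℝ) s,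
        (σ ^ 2 / (1 + σ ^ 2)) *
          (gker σ τinv s u - ∫ v in Set.Icc (0:ℝ) u, gker σ τinv s v * gker σ τinv u v)
      = -(∫ u in Set.Icc (0:ℝ) 1,
            σ ^ 4 * (τinv u - u) /
              ((1 + σ ^ 2) * (1 + σ ^ 2 * (1 + u - τinv u))))
        - (1 / 2) * (σ ^ 2 / (1 + σ ^ 2)) *
            ∫ v in Set.Icc (0:ℝ) 1,
              (σ ^ 2 * (τinv v - v) / (1 + σ ^ 2 * (1 + v - τinv v))) ^ 2 := by
  have hτ : Measurable τinv := hmono.measurable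
  have hτ1' : ∀ u ∈ Icc (0 : ℝ) 1, u ≤ τinv u := fun u _ => hτ1 u
  have hg := integrableOn_lowerTriangle_gker (σ := σ) hτ hτ2
  have hprimitive := integrableOn_lowerTriangle_integral_gker_sq (σ := σ) hτ hτ2
  have hfirst : ∫ u in Icc 0 1, σ ^ 4 * (τinv u - u) /
      ((1 + σ ^ 2) * (1 + σ ^ 2 * (1 + u - τinv u)))
      = σ ^ 2 / (1 + σ ^ 2) * ∫ u in Icc 0 1, gcoef σ τinv u * (τinv u - u) := by
    rw [← integral_const_mul]
    congr 1 with u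
    simp only [gcoef, div_eq_mul_inv, mul_inv]
    ring
  have hsecond : ∫ v in Icc 0 1, (σ ^ 2 * (τinv v - v) / (1 + σ ^ 2 * (1 + v - τinv v))) ^ 2
      = ∫ v in Icc 0 1, (gcoef σ τinv v * (τinv v - v)) ^ 2 := by
    congr 1 with v
    unfold gcoef
    ring
  calc _ = ∫ s in Icc 0 1, ∫ u in Icc 0 s,
        σ ^ 2 / (1 + σ ^ 2) * (gker σ τinv s u - ∫ v in Icc 0 u, gker σ τinv s v ^ 2) :=
        setIntegral_congr_fun measurableSet_Icc fun s _ =>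
          setIntegral_congr_fun measurableSet_Icc fun u hu => by
            simp only [gker_mul_gker_of_le hu.2]
    _ = ∫ p in lowerTriangle 0 1,
        σ ^ 2 / (1 + σ ^ 2) * (gker σ τinv p.1 p.2 - ∫ v in Icc 0 p.2, gker σ τinv p.1 v ^ 2) :=
        (setIntegral_lowerTriangle_eq_integral_integral
          (fun s u => σ ^ 2 / (1 + σ ^ 2) * (gker σ τinv s u - ∫ v in Icc 0 u, gker σ τinv s v ^ 2))
          ((hg.sub hprimitive).const_mul (σ ^ 2 / (1 + σ ^ 2)) :)).symm
    _ = σ ^ 2 / (1 + σ ^ 2) * ((∫ p in lowerTriangle 0 1, gker σ τinv p.1 p.2)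
        - ∫ p in lowerTriangle 0 1, ∫ v in Icc 0 p.2, gker σ τinv p.1 v ^ 2) := by
        rw [integral_const_mul, integral_sub hg hprimitive]
    _ = _ := by
        rw [setIntegral_lowerTriangle_gker hτ hτ1' hτ2,
          setIntegral_lowerTriangle_integral_gker_sq hτ hτ1' hτ2, hfirst, hsecond]
        ring

/-- Computation of `∫₀¹∫₀ˢ f(s,u) g̃(s,u) du ds` in the computational example
with `f ≡ σ²/(1+σ²)` and `g̃(s,u) = g(s,u) − ∫₀ᵘ g(s,v)g(u,v) dv`. -/
theorem f_gtilde_double_integral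
    (σ : ℝ) (hσ : 0 < σ) (τinv : ℝ → ℝ) (hmono : Monotone τinv)
    (hτ1 : ∀ u : ℝ, u ≤ τinv u) (hτ2 : ∀ u ∈ Set.Icc (0:ℝ) 1, τinv u ≤ 1) :
    ∫ s in Set.Icc (0:ℝ) 1, ∫ u in Set.Icc (0:ℝ) s,
        (σ ^ 2 / (1 + σ ^ 2)) *
          (gker σ τinv s u - ∫ v in Set.Icc (0:ℝ) u, gker σ τinv s v * gker σ τinv u v)
      = -(∫ u in Set.Icc (0:ℝ) 1,
            σ ^ 4 * (τinv u - u) /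
              ((1 + σ ^ 2) * (1 + σ ^ 2 * (1 + u - τinv u))))
        - (1 / 2) * (σ ^ 2 / (1 + σ ^ 2)) *
            ∫ v in Set.Icc (0:ℝ) 1,
              (σ ^ 2 * (τinv v - v) / (1 + σ ^ 2 * (1 + v - τinv v))) ^ 2 :=
  f_gtilde_double_integral_general σ τinv hmono hτ1 hτ2
end

section
/- Let (Ω, 𝔽, ℚ) be a filtered probability space with a Brownian motion B, and let γ be a progressively measurable process with respect to the delayed filtration (𝔽_{(t−δ)⁺})_{t∈[0,T]} for some δ > 0, with ∫₀ᵀ γ_t² dt < ∞ a.s. If the negative part (∫₀ᵀ γ_t dB_t)⁻ is ℚ-integrable, then 𝔼_ℚ[∫₀ᵀ γ_t dB_t] = 0. -/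
open MeasureTheory ProbabilityTheory
open scoped NNReal

/-!
Let `Z_k = B_{t_{k+1}} - B_{t_k}` and `S_k = ∑_{i<k} ξ_i Z_i`. The increment `Z_k` is centred and
independent of `(S_k, ξ_k)`, so the law of `(S_k, ξ_k, Z_k)` is a product and, for fixed
`(S_k, ξ_k) = (a, b)`, `S_{k+1} = a + b Z_k` has mean `a`. Jensen for the convex function
`x ↦ max (-x) 0` on the inner integral gives `𝔼[S_k⁻] ≤ 𝔼[S_{k+1}⁻]`, so integrability of `S_n⁻`
propagates down to every `S_k⁻`. Going up, `|x| = x + 2 x⁻` integrated over `Z_k` shows that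
`S_{k+1}` is integrable once `S_k` is, and Fubini gives `𝔼[S_{k+1}] = 𝔼[S_k] = 0`.
-/

lemma max_neg_integral_le_integral_max_neg {α : Type*} {mα : MeasurableSpace α} {μ : Measure α}
    {f : α → ℝ} (hf : Integrable f μ) :
    max (-∫ x, f x ∂μ) 0 ≤ ∫ x, max (-f x) 0 ∂μ := by
  refine max_le ?_ (integral_nonneg fun _ => le_max_right _ _)
  rw [← integral_neg]
  exact integral_mono hf.neg hf.neg_part fun _ => le_max_left _ _

lemma Real.norm_eq_add_two_mul_max_neg (r : ℝ) : ‖r‖ = r + 2 * max (-r) 0 := by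
  rcases le_total r 0 with h | h
  · rw [Real.norm_of_nonpos h, max_eq_left (neg_nonneg.2 h)]; ring
  · rw [Real.norm_of_nonneg h, max_eq_right (neg_nonpos.2 h)]; ring

theorem integrable_prod_of_integrable_max_neg {α β : Type*} {mα : MeasurableSpace α}
    {mβ : MeasurableSpace β} {μ : Measure α} {ν : Measure β} [SFinite ν] {f : α × β → ℝ}
    (hf : AEStronglyMeasurable f (μ.prod ν))
    (hsection : ∀ᵐ x ∂μ, Integrable (fun y => f (x, y)) ν)
    (hmean : Integrable (fun x => ∫ y, f (x, y) ∂ν) μ)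
    (hneg : Integrable (fun p => max (-f p) 0) (μ.prod ν)) :
    Integrable f (μ.prod ν) := by
  refine (integrable_prod_iff hf).2 ⟨hsection, ?_⟩
  refine (hmean.add (hneg.integral_prod_left.const_mul 2)).congr ?_
  filter_upwards [hsection] with x hx
  simp only [Real.norm_eq_add_two_mul_max_neg, Pi.add_apply]
  rw [integral_add hx (hx.neg_part.const_mul 2), integral_const_mul]

section CentredAffine

variable {ν : Measure ℝ} [IsProbabilityMeasure ν]

lemma integrable_const_add_mul (hν : Integrable id ν) (a b : ℝ) :
    Integrable (fun z => a + b * z) ν :=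
  (integrable_const a).add (hν.const_mul b)

lemma integral_const_add_mul_of_integral_id_eq_zero (hν : Integrable id ν)
    (hν0 : ∫ z, z ∂ν = 0) (a b : ℝ) : ∫ z, (a + b * z) ∂ν = a := by
  have hbz : Integrable (fun z => b * z) ν := hν.const_mul b
  rw [integral_add (integrable_const a) hbz, integral_const_mul, hν0]
  simp

variable {μ : Measure (ℝ × ℝ)}

lemma integrable_max_neg_fst_of_prod (hν : Integrable id ν) (hν0 : ∫ z, z ∂ν = 0)
    (hneg : Integrable (fun q : (ℝ × ℝ) × ℝ => max (-(q.1.1 + q.1.2 * q.2)) 0) (μ.prod ν)) :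
    Integrable (fun p : ℝ × ℝ => max (-p.1) 0) μ := by
  refine hneg.integral_prod_left.mono' (by fun_prop) (ae_of_all _ fun p => ?_)
  rw [Real.norm_of_nonneg (le_max_right _ _)]
  simpa only [integral_const_add_mul_of_integral_id_eq_zero hν hν0] using
    max_neg_integral_le_integral_max_neg (integrable_const_add_mul hν p.1 p.2)

lemma integrable_and_integral_prod_affine [SFinite μ] (hν : Integrable id ν)
    (hν0 : ∫ z, z ∂ν = 0)
    (hfst : Integrable (fun p : ℝ × ℝ => p.1) μ)
    (hneg : Integrable (fun q : (ℝ × ℝ) × ℝ => max (-(q.1.1 + q.1.2 * q.2)) 0) (μ.prod ν)) :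
    Integrable (fun q : (ℝ × ℝ) × ℝ => q.1.1 + q.1.2 * q.2) (μ.prod ν) ∧
      ∫ q, (q.1.1 + q.1.2 * q.2) ∂(μ.prod ν) = ∫ p, p.1 ∂μ := by
  have hmean := integral_const_add_mul_of_integral_id_eq_zero hν hν0
  have hint : Integrable (fun q : (ℝ × ℝ) × ℝ => q.1.1 + q.1.2 * q.2) (μ.prod ν) :=
    integrable_prod_of_integrable_max_neg (by fun_prop)
      (ae_of_all _ fun p => integrable_const_add_mul hν p.1 p.2)
      (by simpa only [hmean] using hfst) hneg
  refine ⟨hint, ?_⟩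
  rw [integral_prod _ hint]
  exact integral_congr_ae (ae_of_all _ fun p => hmean p.1 p.2)

end CentredAffine

section IndependentCentredFactor

variable {Ω : Type*} {mΩ : MeasurableSpace Ω} {Q : Measure Ω} {W X Z : Ω → ℝ}

lemma ProbabilityTheory.HasLaw.integrable_comp_iff {𝓧 : Type*} {m𝓧 : MeasurableSpace 𝓧}
    {ρ : Measure 𝓧} {V : Ω → 𝓧} (hV : HasLaw V ρ Q) {g : 𝓧 → ℝ} (hg : AEStronglyMeasurable g ρ) :
    Integrable (fun ω => g (V ω)) Q ↔ Integrable g ρ := by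
  rw [← hV.map_eq] at hg ⊢
  exact (integrable_map_measure hg hV.aemeasurable).symm

lemma integrable_max_neg_of_integrable_max_neg_add_mul [IsProbabilityMeasure Q]
    (hWX : AEMeasurable (fun ω => (W ω, X ω)) Q) (hZ : Integrable Z Q) (hZ0 : Q[Z] = 0)
    (hind : IndepFun (fun ω => (W ω, X ω)) Z Q)
    (hneg : Integrable (fun ω => max (-(W ω + X ω * Z ω)) 0) Q) :
    Integrable (fun ω => max (-W ω) 0) Q := by
  have hWXlaw : HasLaw (fun ω => (W ω, X ω)) (Q.map fun ω => (W ω, X ω)) Q := ⟨hWX, rfl⟩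
  have hZlaw : HasLaw Z (Q.map Z) Q := ⟨hZ.aemeasurable, rfl⟩
  have := Measure.isProbabilityMeasure_map (μ := Q) hZ.aemeasurable
  have hν : Integrable id (Q.map Z) := (hZlaw.integrable_comp_iff aestronglyMeasurable_id).1 hZ
  have hlaw := hind.hasLaw_prod hWXlaw hZlaw
  refine (hWXlaw.integrable_comp_iff (g := fun p : ℝ × ℝ => max (-p.1) 0) (by fun_prop)).2 ?_
  exact integrable_max_neg_fst_of_prod hν (hZlaw.integral_eq ▸ hZ0)
    ((hlaw.integrable_comp_iff (by fun_prop)).1 hneg)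

lemma integrable_add_mul_and_integral_eq_of_indepFun [IsProbabilityMeasure Q]
    (hWX : AEMeasurable (fun ω => (W ω, X ω)) Q) (hZ : Integrable Z Q) (hZ0 : Q[Z] = 0)
    (hind : IndepFun (fun ω => (W ω, X ω)) Z Q) (hW : Integrable W Q)
    (hneg : Integrable (fun ω => max (-(W ω + X ω * Z ω)) 0) Q) :
    Integrable (fun ω => W ω + X ω * Z ω) Q ∧ ∫ ω, (W ω + X ω * Z ω) ∂Q = ∫ ω, W ω ∂Q := by
  have hWXlaw : HasLaw (fun ω => (W ω, X ω)) (Q.map fun ω => (W ω, X ω)) Q := ⟨hWX, rfl⟩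
  have hZlaw : HasLaw Z (Q.map Z) Q := ⟨hZ.aemeasurable, rfl⟩
  have := Measure.isProbabilityMeasure_map (μ := Q) hZ.aemeasurable
  have hν : Integrable id (Q.map Z) := (hZlaw.integrable_comp_iff aestronglyMeasurable_id).1 hZ
  have hlaw := hind.hasLaw_prod hWXlaw hZlaw
  obtain ⟨hint, hmean⟩ := integrable_and_integral_prod_affine hν (hZlaw.integral_eq ▸ hZ0)
    ((hWXlaw.integrable_comp_iff (by fun_prop)).1 hW)
    ((hlaw.integrable_comp_iff (by fun_prop)).1 hneg)
  refine ⟨(hlaw.integrable_comp_iff (by fun_prop)).2 hint, ?_⟩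
  have h1 := hlaw.integral_comp (f := fun q : (ℝ × ℝ) × ℝ => q.1.1 + q.1.2 * q.2) (by fun_prop)
  have h2 := hWXlaw.integral_comp (f := fun p : ℝ × ℝ => p.1) (by fun_prop)
  simp only [Function.comp_def] at h1 h2
  rw [h1, h2, hmean]

end IndependentCentredFactor

def MeasureTheory.Filtration.comp {ι κ : Type*} [Preorder ι] [Preorder κ] {Ω : Type*}
    {m : MeasurableSpace Ω} (ℱ : Filtration ι m) {τ : κ → ι} (hτ : Monotone τ) :
    Filtration κ m :=
  ⟨fun k => ℱ (τ k), fun _ _ h => ℱ.mono (hτ h), fun _ => ℱ.le _⟩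

section MartingaleTransform

open Finset

variable {Ω : Type*} {mΩ : MeasurableSpace Ω} {Q : Measure Ω} {𝒢 : Filtration ℕ mΩ}
  {ξ Z : ℕ → Ω → ℝ} {n : ℕ}

lemma measurable_sum_range_mul (hξ : ∀ k < n, Measurable[𝒢 k] (ξ k))
    (hZ : ∀ k < n, Measurable[𝒢 (k + 1)] (Z k)) {k : ℕ} (hk : k ≤ n) :
    Measurable[𝒢 k] fun ω => ∑ i ∈ range k, ξ i ω * Z i ω :=
  Finset.measurable_sum _ fun i hi => by
    have hik : i < k := mem_range.1 hi
    exact ((hξ i (by omega)).mono (𝒢.mono hik.le) le_rfl).mul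
      ((hZ i (by omega)).mono (𝒢.mono hik) le_rfl)

lemma indepFun_sum_range_mul (hξ : ∀ k < n, Measurable[𝒢 k] (ξ k))
    (hZ : ∀ k < n, Measurable[𝒢 (k + 1)] (Z k))
    (hind : ∀ k < n, Indep (MeasurableSpace.comap (Z k) (borel ℝ)) (𝒢 k) Q) {k : ℕ}
    (hk : k < n) :
    IndepFun (fun ω => (∑ i ∈ range k, ξ i ω * Z i ω, ξ k ω)) (Z k) Q := by
  rw [IndepFun_iff_Indep]
  exact indep_of_indep_of_le_left (hind k hk).symm <| measurable_iff_comap_le.1 <|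
    (measurable_sum_range_mul hξ hZ hk.le).prodMk (hξ k hk)

theorem integrable_and_integral_sum_range_mul_eq_zero [IsProbabilityMeasure Q]
    (hξ : ∀ k < n, Measurable[𝒢 k] (ξ k)) (hZ : ∀ k < n, Measurable[𝒢 (k + 1)] (Z k))
    (hind : ∀ k < n, Indep (MeasurableSpace.comap (Z k) (borel ℝ)) (𝒢 k) Q)
    (hZint : ∀ k < n, Integrable (Z k) Q) (hZ0 : ∀ k < n, Q[Z k] = 0)
    (hneg : Integrable (fun ω => max (-∑ i ∈ range n, ξ i ω * Z i ω) 0) Q) :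
    Integrable (fun ω => ∑ i ∈ range n, ξ i ω * Z i ω) Q ∧
      ∫ ω, ∑ i ∈ range n, ξ i ω * Z i ω ∂Q = 0 := by
  set S : ℕ → Ω → ℝ := fun k ω => ∑ i ∈ range k, ξ i ω * Z i ω with hS
  have hS_succ (k : ℕ) : S (k + 1) = fun ω => S k ω + ξ k ω * Z k ω :=
    funext fun ω => sum_range_succ _ _
  have hpair (k : ℕ) (hk : k < n) : AEMeasurable (fun ω => (S k ω, ξ k ω)) Q :=
    ((measurable_sum_range_mul hξ hZ hk.le).prodMk (hξ k hk)).mono (𝒢.le k) le_rfl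
      |>.aemeasurable
  have hneg_le (k : ℕ) (hk : k ≤ n) : Integrable (fun ω => max (-S k ω) 0) Q := by
    induction hk using Nat.decreasingInduction with
    | self => exact hneg
    | of_succ k hk ih =>
      rw [hS_succ] at ih
      exact integrable_max_neg_of_integrable_max_neg_add_mul (hpair k hk) (hZint k hk)
        (hZ0 k hk) (indepFun_sum_range_mul hξ hZ hind hk) ih
  have hmean (k : ℕ) (hk : k ≤ n) : Integrable (S k) Q ∧ ∫ ω, S k ω ∂Q = 0 := by
    induction k with
    | zero => simp [hS]
    | succ k ih =>
      obtain ⟨hint, hzero⟩ := ih (by omega)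
      have hnegk := hneg_le (k + 1) hk
      rw [hS_succ] at hnegk ⊢
      obtain ⟨hint', heq⟩ := integrable_add_mul_and_integral_eq_of_indepFun (hpair k hk)
        (hZint k hk) (hZ0 k hk) (indepFun_sum_range_mul hξ hZ hind hk) hint hnegk
      exact ⟨hint', heq.trans hzero⟩
  exact hmean n le_rfl

end MartingaleTransform

lemma ProbabilityTheory.HasLaw.integrable_and_integral_eq_zero_of_gaussianReal {Ω : Type*}
    {mΩ : MeasurableSpace Ω} {Q : Measure Ω} {Y : Ω → ℝ} {v : ℝ≥0}
    (hY : HasLaw Y (gaussianReal 0 v) Q) : Integrable Y Q ∧ Q[Y] = 0 :=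
  ⟨(hY.integrable_comp_iff aestronglyMeasurable_id).2
      (memLp_one_iff_integrable.1 (memLp_id_gaussianReal 1)),
    hY.integral_eq.trans integral_id_gaussianReal⟩

theorem integrable_and_integral_sum_mul_increment_eq_zero {Ω : Type*} {m0 : MeasurableSpace Ω}
    {Q : Measure Ω} [IsProbabilityMeasure Q] {ℱ : Filtration ℝ m0} {B : ℝ → Ω → ℝ}
    (hadapted : ∀ t : ℝ, Measurable[ℱ t] (B t))
    (hincr_gauss : ∀ s t : ℝ, 0 ≤ s → s ≤ t →
      Measure.map (fun ω => B t ω - B s ω) Q = gaussianReal 0 ((t - s).toNNReal))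
    (hincr_indep : ∀ s t : ℝ, 0 ≤ s → s ≤ t →
      Indep (MeasurableSpace.comap (fun ω => B t ω - B s ω) (borel ℝ)) (ℱ s) Q)
    {τ : ℕ → ℝ} (hτ : Monotone τ) (hτ0 : 0 ≤ τ 0) {ξ : ℕ → Ω → ℝ} {n : ℕ}
    (hξ : ∀ k < n, Measurable[ℱ (τ k)] (ξ k))
    (hneg : Integrable
      (fun ω => max (-∑ i ∈ Finset.range n, ξ i ω * (B (τ (i + 1)) ω - B (τ i) ω)) 0) Q) :
    Integrable (fun ω => ∑ i ∈ Finset.range n, ξ i ω * (B (τ (i + 1)) ω - B (τ i) ω)) Q ∧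
      ∫ ω, ∑ i ∈ Finset.range n, ξ i ω * (B (τ (i + 1)) ω - B (τ i) ω) ∂Q = 0 := by
  have hincr (k : ℕ) : (Q.map fun ω => B (τ (k + 1)) ω - B (τ k) ω) =
      gaussianReal 0 ((τ (k + 1) - τ k).toNNReal) :=
    hincr_gauss _ _ (hτ0.trans (hτ k.zero_le)) (hτ k.le_succ)
  have hB (s : ℝ) : Measurable (B s) := (hadapted s).mono (ℱ.le s) le_rfl
  have hlaw (k : ℕ) : HasLaw (fun ω => B (τ (k + 1)) ω - B (τ k) ω) _ Q :=
    ⟨((hB (τ (k + 1))).sub (hB (τ k))).aemeasurable, hincr k⟩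
  refine integrable_and_integral_sum_range_mul_eq_zero (𝒢 := ℱ.comp hτ) hξ
    (fun k _ => (hadapted _).sub ((hadapted _).mono (ℱ.mono (hτ k.le_succ)) le_rfl))
    (fun k _ => hincr_indep _ _ (hτ0.trans (hτ k.zero_le)) (hτ k.le_succ))
    (fun k _ => (hlaw k).integrable_and_integral_eq_zero_of_gaussianReal.1)
    (fun k _ => (hlaw k).integrable_and_integral_eq_zero_of_gaussianReal.2) hneg

theorem delayed_stochastic_integral_zero_mean_general
    {Ω : Type*} {m0 : MeasurableSpace Ω} (Q : Measure Ω) [IsProbabilityMeasure Q]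
    (ℱ : Filtration ℝ m0) (B : ℝ → Ω → ℝ) (δ : ℝ) (hδ : 0 < δ)
    (hadapted : ∀ t : ℝ, Measurable[ℱ t] (B t))
    (hincr_gauss : ∀ s t : ℝ, 0 ≤ s → s ≤ t →
      Measure.map (fun ω => B t ω - B s ω) Q = gaussianReal 0 ((t - s).toNNReal))
    (hincr_indep : ∀ s t : ℝ, 0 ≤ s → s ≤ t →
      Indep (MeasurableSpace.comap (fun ω => B t ω - B s ω) (borel ℝ)) (ℱ s) Q)
    (n : ℕ) (t : Fin (n + 1) → ℝ) (hmono : Monotone t)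
    (ht0 : t 0 = 0)
    (ξ : Fin n → Ω → ℝ)
    (hξ : ∀ i : Fin n, Measurable[ℱ (max (t i.castSucc - δ) 0)] (ξ i))
    (hneg : Integrable
      (fun ω => max (-(∑ i : Fin n, ξ i ω * (B (t i.succ) ω - B (t i.castSucc) ω))) 0) Q) :
    Integrable
      (fun ω => ∑ i : Fin n, ξ i ω * (B (t i.succ) ω - B (t i.castSucc) ω)) Q ∧
    ∫ ω, (∑ i : Fin n, ξ i ω * (B (t i.succ) ω - B (t i.castSucc) ω)) ∂Q = 0 := by
  set τ : ℕ → ℝ := fun k => t (Fin.clamp k n)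
  set ζ : ℕ → Ω → ℝ := fun k => if h : k < n then ξ ⟨k, h⟩ else 0 with hζ
  have hτ_mono : Monotone τ := hmono.comp Fin.clamp_monotone
  have ht_nonneg (j : Fin (n + 1)) : 0 ≤ t j := ht0 ▸ hmono (Fin.zero_le j)
  have hτ_castSucc (i : Fin n) : τ i = t i.castSucc :=
    congrArg t (Fin.ext (by simp [Fin.clamp, i.isLt.le]))
  have hτ_succ (i : Fin n) : τ (i + 1) = t i.succ :=
    congrArg t (Fin.ext (by simp [Fin.clamp, Nat.succ_le_of_lt i.isLt]))
  have hζ_meas (k : ℕ) (hk : k < n) : Measurable[ℱ (τ k)] (ζ k) := by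
    have hdelay : max (t (⟨k, hk⟩ : Fin n).castSucc - δ) 0 ≤ τ k :=
      hτ_castSucc ⟨k, hk⟩ ▸ max_le (by linarith) (ht_nonneg _)
    simpa [hζ, hk] using (hξ ⟨k, hk⟩).mono (ℱ.mono hdelay) le_rfl
  have hsum (ω : Ω) : ∑ i : Fin n, ξ i ω * (B (t i.succ) ω - B (t i.castSucc) ω) =
      ∑ i ∈ Finset.range n, ζ i ω * (B (τ (i + 1)) ω - B (τ i) ω) := by
    rw [← Fin.sum_univ_eq_sum_range (fun i => ζ i ω * (B (τ (i + 1)) ω - B (τ i) ω))]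
    simp [hζ, hτ_castSucc, hτ_succ]
  simp only [hsum] at hneg ⊢
  exact integrable_and_integral_sum_mul_increment_eq_zero hadapted hincr_gauss hincr_indep
    hτ_mono (ht_nonneg _) hζ_meas hneg

/-- Lemma 5.3 of Dolinsky–Zouari (simple-process form): if `B` is an
`ℱ`-Brownian motion under `ℚ` (adapted, with Gaussian increments independent of
the past) and `γ` is a simple process adapted to the strictly delayed filtration
`ℱ_{(t−δ)⁺}`, then whenever the negative part of the stochastic integral
`∑ γ_{tᵢ}(B_{tᵢ₊₁} − B_{tᵢ})` is integrable, the integral is integrable with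
zero `ℚ`-expectation. -/
theorem delayed_stochastic_integral_zero_mean
    {Ω : Type*} {m0 : MeasurableSpace Ω} (Q : Measure Ω) [IsProbabilityMeasure Q]
    (ℱ : Filtration ℝ m0) (B : ℝ → Ω → ℝ) (T δ : ℝ) (hT : 0 < T) (hδ : 0 < δ)
    (hadapted : ∀ t : ℝ, Measurable[ℱ t] (B t))
    (hincr_gauss : ∀ s t : ℝ, 0 ≤ s → s ≤ t →
      Measure.map (fun ω => B t ω - B s ω) Q = gaussianReal 0 ((t - s).toNNReal))
    (hincr_indep : ∀ s t : ℝ, 0 ≤ s → s ≤ t →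
      Indep (MeasurableSpace.comap (fun ω => B t ω - B s ω) (borel ℝ)) (ℱ s) Q)
    (n : ℕ) (t : Fin (n + 1) → ℝ) (hmono : Monotone t)
    (ht0 : t 0 = 0) (htn : t (Fin.last n) = T)
    (ξ : Fin n → Ω → ℝ)
    (hξ : ∀ i : Fin n, Measurable[ℱ (max (t i.castSucc - δ) 0)] (ξ i))
    (hneg : Integrable
      (fun ω => max (-(∑ i : Fin n, ξ i ω * (B (t i.succ) ω - B (t i.castSucc) ω))) 0) Q) :
    Integrable
      (fun ω => ∑ i : Fin n, ξ i ω * (B (t i.succ) ω - B (t i.castSucc) ω)) Q ∧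
    ∫ ω, (∑ i : Fin n, ξ i ω * (B (t i.succ) ω - B (t i.castSucc) ω)) ∂Q = 0 :=
  delayed_stochastic_integral_zero_mean_general Q ℱ B δ hδ hadapted hincr_gauss hincr_indep n t
    hmono ht0 ξ hξ hneg
end
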